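/- arXiv:2310.19988 — 4 statements merged into one kernel-verified Lean document; each statement's English description precedes it below -/
import Mathlib

section
/- Fix y ∈ {0,1} and a ∈ 𝒜, and assume: consistency (P-almost surely, if D = 0 then Y = Y⁰); Y⁰ is conditionally independent of (A, D) given X, i.e. for all y', d ∈ {0,1}, a' ∈ 𝒜, and all x with P(X=x) > 0, P(Y⁰=y', A=a', D=d | X=x) = P(Y⁰=y' | X=x) · P(A=a', D=d | X=x); and positivity given X, i.e. P(D=0, X=x) > 0 whenever P(X=x) > 0. Then the joint law of the group label and the potential outcome is identified: P(A=a, Y⁰=y) = Σ_{x∈𝒳, P(X=x)>0} h(x,a) · μ₀*(y,x) · P(X=x), i.e. P(A=a, Y⁰=y) = E[μ₀*(y,X) · h(X,a)]. -/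
open MeasureTheory

/-- `pr P E` is the probability of the event `E` as a real number. -/
noncomputable def pr {Ω : Type*} [MeasurableSpace Ω] (P : Measure Ω) (E : Set Ω) : ℝ :=
  (P E).toReal

/-- `cpr P E F = P(E | F) = P(E ∩ F) / P(F)`, the conditional probability of `E` given `F`. -/
noncomputable def cpr {Ω : Type*} [MeasurableSpace Ω] (P : Measure Ω) (E F : Set Ω) : ℝ :=
  pr P (E ∩ F) / pr P F


lemma pr_nonneg {Ω : Type*} [MeasurableSpace Ω] (P : Measure Ω) (E : Set Ω) : 0 ≤ pr P E :=
  ENNReal.toReal_nonneg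

lemma pr_mono {Ω : Type*} [MeasurableSpace Ω] (P : Measure Ω) [IsFiniteMeasure P]
    {s t : Set Ω} (h : s ⊆ t) : pr P s ≤ pr P t :=
  ENNReal.toReal_mono (measure_ne_top P t) (measure_mono h)

lemma pr_tsum_fiber {Ω ι : Type*} [MeasurableSpace Ω] [Countable ι] [MeasurableSpace ι]
    [MeasurableSingletonClass ι] (P : Measure Ω) [IsFiniteMeasure P]
    (f : Ω → ι) (hf : Measurable f) (E : Set Ω) (hE : MeasurableSet E) :
    pr P E = ∑' i, pr P (E ∩ f ⁻¹' {i}) := by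
  have hd : Pairwise (Function.onFun Disjoint (fun i => E ∩ f ⁻¹' {i})) := by
    intro i j hij
    simp only [Function.onFun, Set.disjoint_left]
    rintro ω ⟨-, h1⟩ ⟨-, h2⟩
    exact hij ((Set.mem_singleton_iff.mp h1).symm.trans (Set.mem_singleton_iff.mp h2))
  have hu : (⋃ i, E ∩ f ⁻¹' {i}) = E := by
    ext ω; simp
  simp only [pr]
  conv_lhs => rw [← hu]
  rw [measure_iUnion hd (fun i => hE.inter (hf (measurableSet_singleton i))),
    ENNReal.tsum_toReal_eq (fun i => measure_ne_top P _)]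

/-- under consistency, conditional independence of `Y⁰` and `(A, D)` given `X`, and
positivity given `X`, the joint law of the group label and the potential outcome is identified:
`P(A=a, Y⁰=y) = Σ_x h(x,a) · μ₀*(y,x) · P(X=x) = E[μ₀*(y,X)·h(X,a)]`,
where `μ₀*(y,x) = P(Y=y | D=0, X=x)` and `h(x,a) = P(A=a | X=x)`.
Binary variables are modelled as `Bool`-valued, with `1 = true` and `0 = false`. -/
theorem stmt_5
    {Ω 𝒜 𝒳 : Type*} [MeasurableSpace Ω]
    [MeasurableSpace 𝒜] [MeasurableSingletonClass 𝒜] [Countable 𝒜] [Nonempty 𝒜]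
    [MeasurableSpace 𝒳] [MeasurableSingletonClass 𝒳] [Countable 𝒳] [Nonempty 𝒳]
    (P : Measure Ω) [IsProbabilityMeasure P]
    (Y0 Y D : Ω → Bool) (A : Ω → 𝒜) (X : Ω → 𝒳)
    (hY0 : Measurable Y0) (hY : Measurable Y) (hD : Measurable D)
    (hA : Measurable A) (hX : Measurable X)
    (y : Bool) (a : 𝒜)
    (hcons : ∀ᵐ ω ∂P, D ω = false → Y ω = Y0 ω)
    (hCI : ∀ (y' d : Bool) (a' : 𝒜) (x : 𝒳), 0 < pr P {ω | X ω = x} →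
      cpr P {ω | Y0 ω = y' ∧ A ω = a' ∧ D ω = d} {ω | X ω = x} =
        cpr P {ω | Y0 ω = y'} {ω | X ω = x} *
          cpr P {ω | A ω = a' ∧ D ω = d} {ω | X ω = x})
    (hposD : ∀ x : 𝒳, 0 < pr P {ω | X ω = x} →
      0 < pr P {ω | D ω = false ∧ X ω = x}) :
    pr P {ω | A ω = a ∧ Y0 ω = y} =
      ∑' x : 𝒳,
        cpr P {ω | A ω = a} {ω | X ω = x} *
          cpr P {ω | Y ω = y} {ω | D ω = false ∧ X ω = x} *
          pr P {ω | X ω = x} := by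
  have mY0 : ∀ y' : Bool, MeasurableSet {ω | Y0 ω = y'} := fun y' =>
    hY0 (measurableSet_singleton y')
  have mA : ∀ a' : 𝒜, MeasurableSet {ω | A ω = a'} := fun a' =>
    hA (measurableSet_singleton a')
  have mD : MeasurableSet {ω | D ω = false} := hD (measurableSet_singleton false)
  have key : ∀ x : 𝒳,
      pr P ({ω | A ω = a ∧ Y0 ω = y} ∩ X ⁻¹' {x}) =
        cpr P {ω | A ω = a} {ω | X ω = x} *
          cpr P {ω | Y ω = y} {ω | D ω = false ∧ X ω = x} *
          pr P {ω | X ω = x} := by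
    intro x
    have hFx : X ⁻¹' {x} = {ω | X ω = x} := rfl
    rcases eq_or_lt_of_le (pr_nonneg P {ω | X ω = x}) with hp | hp
    · -- zero-probability fiber
      rw [← hp, mul_zero]
      refine le_antisymm ?_ (pr_nonneg _ _)
      calc pr P ({ω | A ω = a ∧ Y0 ω = y} ∩ X ⁻¹' {x}) ≤ pr P {ω | X ω = x} :=
            pr_mono P (by rw [hFx]; exact Set.inter_subset_right)
        _ = 0 := hp.symm
    · -- positive-probability fiber
      set p := pr P {ω | X ω = x} with hpdef
      have hp0 : p ≠ 0 := ne_of_gt hp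
      have hcm : ∀ E : Set Ω, cpr P E {ω | X ω = x} * p = pr P (E ∩ {ω | X ω = x}) :=
        fun E => div_mul_cancel₀ _ hp0
      -- (1) consistency on the fiber
      have hconsP : pr P ({ω | Y ω = y} ∩ {ω | D ω = false ∧ X ω = x}) =
          pr P ({ω | Y0 ω = y ∧ D ω = false} ∩ {ω | X ω = x}) := by
        have hae : (({ω | Y ω = y} ∩ {ω | D ω = false ∧ X ω = x} : Set Ω))
            =ᵐ[P] (({ω | Y0 ω = y ∧ D ω = false} ∩ {ω | X ω = x} : Set Ω)) := by
          rw [Filter.eventuallyEq_set]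
          filter_upwards [hcons] with ω h
          simp only [Set.mem_inter_iff, Set.mem_setOf_eq]
          constructor
          · rintro ⟨h1, h2, h3⟩
            exact ⟨⟨(h h2).symm.trans h1, h2⟩, h3⟩
          · rintro ⟨⟨h1, h2⟩, h3⟩
            exact ⟨(h h2).trans h1, h2, h3⟩
        exact congrArg ENNReal.toReal (measure_congr hae)
      -- (2) CI summed over a' at d = false
      have goal2 : pr P ({ω | Y0 ω = y ∧ D ω = false} ∩ {ω | X ω = x}) =
          cpr P {ω | Y0 ω = y} {ω | X ω = x} *
            pr P ({ω | D ω = false} ∩ {ω | X ω = x}) := by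
        have hs1 : pr P ({ω | Y0 ω = y ∧ D ω = false} ∩ {ω | X ω = x}) =
            ∑' a' : 𝒜, pr P ({ω | Y0 ω = y ∧ A ω = a' ∧ D ω = false} ∩ {ω | X ω = x}) := by
          rw [pr_tsum_fiber P A hA ({ω | Y0 ω = y ∧ D ω = false} ∩ {ω | X ω = x})
            (by exact ((mY0 y).inter mD).inter (hX (measurableSet_singleton x)))]
          refine tsum_congr fun a' => congrArg (pr P) ?_
          ext ω
          simp only [Set.mem_inter_iff, Set.mem_setOf_eq, Set.mem_preimage,
            Set.mem_singleton_iff]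
          tauto
        have hs2 : pr P ({ω | D ω = false} ∩ {ω | X ω = x}) =
            ∑' a' : 𝒜, pr P ({ω | A ω = a' ∧ D ω = false} ∩ {ω | X ω = x}) := by
          rw [pr_tsum_fiber P A hA ({ω | D ω = false} ∩ {ω | X ω = x})
            (by exact mD.inter (hX (measurableSet_singleton x)))]
          refine tsum_congr fun a' => congrArg (pr P) ?_
          ext ω
          simp only [Set.mem_inter_iff, Set.mem_setOf_eq, Set.mem_preimage,
            Set.mem_singleton_iff]
          tauto
        rw [hs1, hs2, ← tsum_mul_left]
        refine tsum_congr fun a' => ?_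
        have hterm := hCI y false a' x hp
        calc pr P ({ω | Y0 ω = y ∧ A ω = a' ∧ D ω = false} ∩ {ω | X ω = x})
            = cpr P {ω | Y0 ω = y ∧ A ω = a' ∧ D ω = false} {ω | X ω = x} * p :=
              (hcm _).symm
          _ = cpr P {ω | Y0 ω = y} {ω | X ω = x} *
                (cpr P {ω | A ω = a' ∧ D ω = false} {ω | X ω = x} * p) := by
              rw [hterm]; ring
          _ = cpr P {ω | Y0 ω = y} {ω | X ω = x} *
                pr P ({ω | A ω = a' ∧ D ω = false} ∩ {ω | X ω = x}) := by rw [hcm]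
      -- (3) CI summed over d
      have goal3 : pr P ({ω | Y0 ω = y ∧ A ω = a} ∩ {ω | X ω = x}) =
          cpr P {ω | Y0 ω = y} {ω | X ω = x} *
            pr P ({ω | A ω = a} ∩ {ω | X ω = x}) := by
        have hs1 : pr P ({ω | Y0 ω = y ∧ A ω = a} ∩ {ω | X ω = x}) =
            ∑' d : Bool, pr P ({ω | Y0 ω = y ∧ A ω = a ∧ D ω = d} ∩ {ω | X ω = x}) := by
          rw [pr_tsum_fiber P D hD ({ω | Y0 ω = y ∧ A ω = a} ∩ {ω | X ω = x})
            (by exact ((mY0 y).inter (mA a)).inter (hX (measurableSet_singleton x)))]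
          refine tsum_congr fun d => congrArg (pr P) ?_
          ext ω
          simp only [Set.mem_inter_iff, Set.mem_setOf_eq, Set.mem_preimage,
            Set.mem_singleton_iff]
          tauto
        have hs2 : pr P ({ω | A ω = a} ∩ {ω | X ω = x}) =
            ∑' d : Bool, pr P ({ω | A ω = a ∧ D ω = d} ∩ {ω | X ω = x}) := by
          rw [pr_tsum_fiber P D hD ({ω | A ω = a} ∩ {ω | X ω = x})
            (by exact (mA a).inter (hX (measurableSet_singleton x)))]
          refine tsum_congr fun d => congrArg (pr P) ?_
          ext ω
          simp only [Set.mem_inter_iff, Set.mem_setOf_eq, Set.mem_preimage,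
            Set.mem_singleton_iff]
          tauto
        rw [hs1, hs2, ← tsum_mul_left]
        refine tsum_congr fun d => ?_
        have hterm := hCI y d a x hp
        calc pr P ({ω | Y0 ω = y ∧ A ω = a ∧ D ω = d} ∩ {ω | X ω = x})
            = cpr P {ω | Y0 ω = y ∧ A ω = a ∧ D ω = d} {ω | X ω = x} * p := (hcm _).symm
          _ = cpr P {ω | Y0 ω = y} {ω | X ω = x} *
                (cpr P {ω | A ω = a ∧ D ω = d} {ω | X ω = x} * p) := by rw [hterm]; ring
          _ = cpr P {ω | Y0 ω = y} {ω | X ω = x} *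
                pr P ({ω | A ω = a ∧ D ω = d} ∩ {ω | X ω = x}) := by rw [hcm]
      -- μ₀*(y,x) = cpr{Y0=y}{X=x}
      have hposx : 0 < pr P {ω | D ω = false ∧ X ω = x} := hposD x hp
      have hDset : {ω | D ω = false ∧ X ω = x} = {ω | D ω = false} ∩ {ω | X ω = x} := rfl
      have hmu : cpr P {ω | Y ω = y} {ω | D ω = false ∧ X ω = x} =
          cpr P {ω | Y0 ω = y} {ω | X ω = x} := by
        rw [cpr, hconsP, goal2, hDset]
        have : pr P ({ω | D ω = false} ∩ {ω | X ω = x}) ≠ 0 := by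
          rw [← hDset]; exact ne_of_gt hposx
        field_simp
      -- assemble
      have hLset : {ω | A ω = a ∧ Y0 ω = y} ∩ X ⁻¹' {x} =
          {ω | Y0 ω = y ∧ A ω = a} ∩ {ω | X ω = x} := by
        ext ω
        simp only [Set.mem_inter_iff, Set.mem_setOf_eq, Set.mem_preimage,
          Set.mem_singleton_iff]
        tauto
      rw [hLset, goal3, hmu, ← hcm {ω | A ω = a}]
      ring
  rw [pr_tsum_fiber P X hX {ω | A ω = a ∧ Y0 ω = y} (by exact (mA a).inter (mY0 y))]
  exact tsum_congr key
end

section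
/- Fix y ∈ {0,1} and a ∈ 𝒜 with P(Y⁰=y) > 0, and assume: consistency (P-almost surely, if D = 0 then Y = Y⁰); Y⁰ is conditionally independent of (A, D) given X, i.e. for all y', d ∈ {0,1}, a' ∈ 𝒜, and all x with P(X=x) > 0, P(Y⁰=y', A=a', D=d | X=x) = P(Y⁰=y' | X=x) · P(A=a', D=d | X=x); and positivity given X, i.e. P(D=0, X=x) > 0 whenever P(X=x) > 0. Then the marginal conditional group-membership probability is identified: P(A=a | Y⁰=y) = E[μ₀*(y,X) · h(X,a)] / E[μ₀*(y,X)], where the denominator is strictly positive since it equals P(Y⁰=y). -/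
open MeasureTheory

lemma pr_mono_zero {Ω : Type*} [MeasurableSpace Ω] (P : Measure Ω) [IsFiniteMeasure P]
    {E F : Set Ω} (h : E ⊆ F) (hF : pr P F = 0) : pr P E = 0 := by
  have hF0 : P F = 0 := by
    rcases (ENNReal.toReal_eq_zero_iff _).1 hF with h'|h'
    · exact h'
    · exact absurd h' (measure_ne_top P F)
  simp [pr, measure_mono_null h hF0]

lemma cpr_mul {Ω : Type*} [MeasurableSpace Ω] (P : Measure Ω) {E F : Set Ω}
    (h : pr P F ≠ 0) : cpr P E F * pr P F = pr P (E ∩ F) :=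
  div_mul_cancel₀ _ h

lemma pr_partition {Ω 𝒳 : Type*} [MeasurableSpace Ω] [MeasurableSpace 𝒳]
    [MeasurableSingletonClass 𝒳] [Countable 𝒳] (P : Measure Ω) [IsFiniteMeasure P]
    (X : Ω → 𝒳) (hX : Measurable X) (E : Set Ω) (hE : MeasurableSet E) :
    pr P E = ∑' x, pr P (E ∩ {ω | X ω = x}) := by
  have hmeas : ∀ x : 𝒳, MeasurableSet (E ∩ {ω | X ω = x}) := fun x =>
    hE.inter (hX (MeasurableSet.singleton x))
  have hdisj : Pairwise (Function.onFun Disjoint fun x => E ∩ {ω | X ω = x}) := by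
    intro i j hij
    simp only [Function.onFun, Set.disjoint_left]
    rintro ω ⟨-, h1⟩ ⟨-, h2⟩
    exact hij ((h1 : X ω = i).symm.trans h2)
  have hunion : E = ⋃ x, E ∩ {ω | X ω = x} := by
    ext ω; simp
  have hm := measure_iUnion (μ := P) hdisj hmeas
  rw [pr]
  conv_lhs => rw [hunion]
  rw [hm, ENNReal.tsum_toReal_eq (fun x => measure_ne_top P _)]
  rfl

/-- under consistency, conditional independence of `Y⁰` and `(A, D)` given `X`, and
positivity given `X`, the marginal conditional group-membership probability is identified:
`P(A=a | Y⁰=y) = E[μ₀*(y,X)·h(X,a)] / E[μ₀*(y,X)]`,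
where `μ₀*(y,x) = P(Y=y | D=0, X=x)`, `h(x,a) = P(A=a | X=x)`, and the denominator is strictly
positive since it equals `P(Y⁰=y)`.
Binary variables are modelled as `Bool`-valued, with `1 = true` and `0 = false`. -/
theorem stmt_8
    {Ω 𝒜 𝒳 : Type*} [MeasurableSpace Ω]
    [MeasurableSpace 𝒜] [MeasurableSingletonClass 𝒜] [Countable 𝒜] [Nonempty 𝒜]
    [MeasurableSpace 𝒳] [MeasurableSingletonClass 𝒳] [Countable 𝒳] [Nonempty 𝒳]
    (P : Measure Ω) [IsProbabilityMeasure P]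
    (Y0 Y D : Ω → Bool) (A : Ω → 𝒜) (X : Ω → 𝒳)
    (hY0 : Measurable Y0) (hY : Measurable Y) (hD : Measurable D)
    (hA : Measurable A) (hX : Measurable X)
    (y : Bool) (a : 𝒜)
    (hpos : 0 < pr P {ω | Y0 ω = y})
    (hcons : ∀ᵐ ω ∂P, D ω = false → Y ω = Y0 ω)
    (hCI : ∀ (y' d : Bool) (a' : 𝒜) (x : 𝒳), 0 < pr P {ω | X ω = x} →
      cpr P {ω | Y0 ω = y' ∧ A ω = a' ∧ D ω = d} {ω | X ω = x} =
        cpr P {ω | Y0 ω = y'} {ω | X ω = x} *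
          cpr P {ω | A ω = a' ∧ D ω = d} {ω | X ω = x})
    (hposD : ∀ x : 𝒳, 0 < pr P {ω | X ω = x} →
      0 < pr P {ω | D ω = false ∧ X ω = x}) :
    0 < (∑' x : 𝒳,
          cpr P {ω | Y ω = y} {ω | D ω = false ∧ X ω = x} * pr P {ω | X ω = x}) ∧
    (∑' x : 𝒳,
        cpr P {ω | Y ω = y} {ω | D ω = false ∧ X ω = x} * pr P {ω | X ω = x}) =
      pr P {ω | Y0 ω = y} ∧
    cpr P {ω | A ω = a} {ω | Y0 ω = y} =
      (∑' x : 𝒳,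
          cpr P {ω | Y ω = y} {ω | D ω = false ∧ X ω = x} *
            cpr P {ω | A ω = a} {ω | X ω = x} * pr P {ω | X ω = x}) /
        (∑' x : 𝒳,
            cpr P {ω | Y ω = y} {ω | D ω = false ∧ X ω = x} * pr P {ω | X ω = x}) := by
  classical
  have msY0 : MeasurableSet {ω | Y0 ω = y} := hY0 (MeasurableSet.singleton y)
  have msA : MeasurableSet {ω | A ω = a} := hA (MeasurableSet.singleton a)
  -- the central per-x identities, under positivity of `pr P {X = x}`
  have key : ∀ x : 𝒳, 0 < pr P {ω | X ω = x} →
      cpr P {ω | Y ω = y} {ω | D ω = false ∧ X ω = x} =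
        cpr P {ω | Y0 ω = y} {ω | X ω = x} ∧
      pr P (({ω | A ω = a} ∩ {ω | Y0 ω = y}) ∩ {ω | X ω = x}) =
        cpr P {ω | Y0 ω = y} {ω | X ω = x} * pr P ({ω | A ω = a} ∩ {ω | X ω = x}) := by
    intro x hx
    have hxne : pr P {ω | X ω = x} ≠ 0 := ne_of_gt hx
    have hxD := hposD x hx
    have hxDne : pr P {ω | D ω = false ∧ X ω = x} ≠ 0 := ne_of_gt hxD
    have msX : MeasurableSet {ω | X ω = x} := hX (MeasurableSet.singleton x)
    have msE2 : MeasurableSet {ω | D ω = false ∧ X ω = x} :=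
      (hD (MeasurableSet.singleton false)).inter msX
    -- CI in product form
    have hCI' : ∀ (d : Bool) (a' : 𝒜),
        pr P ({ω | Y0 ω = y ∧ A ω = a' ∧ D ω = d} ∩ {ω | X ω = x}) =
          cpr P {ω | Y0 ω = y} {ω | X ω = x} *
            pr P ({ω | A ω = a' ∧ D ω = d} ∩ {ω | X ω = x}) := by
      intro d a'
      have h := hCI y d a' x hx
      calc pr P ({ω | Y0 ω = y ∧ A ω = a' ∧ D ω = d} ∩ {ω | X ω = x})
          = cpr P {ω | Y0 ω = y ∧ A ω = a' ∧ D ω = d} {ω | X ω = x} *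
              pr P {ω | X ω = x} := (cpr_mul P hxne).symm
        _ = cpr P {ω | Y0 ω = y} {ω | X ω = x} *
              (cpr P {ω | A ω = a' ∧ D ω = d} {ω | X ω = x} * pr P {ω | X ω = x}) := by
              rw [h]; ring
        _ = cpr P {ω | Y0 ω = y} {ω | X ω = x} *
              pr P ({ω | A ω = a' ∧ D ω = d} ∩ {ω | X ω = x}) := by
              rw [cpr_mul P hxne]
    -- part 2: numerator identity
    have hNa : pr P (({ω | A ω = a} ∩ {ω | Y0 ω = y}) ∩ {ω | X ω = x}) =
        cpr P {ω | Y0 ω = y} {ω | X ω = x} * pr P ({ω | A ω = a} ∩ {ω | X ω = x}) := by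
      have h1 := pr_partition P D hD (({ω | A ω = a} ∩ {ω | Y0 ω = y}) ∩ {ω | X ω = x})
        ((msA.inter msY0).inter msX)
      have h2 : ∀ d : Bool,
          (({ω | A ω = a} ∩ {ω | Y0 ω = y}) ∩ {ω | X ω = x}) ∩ {ω | D ω = d} =
            {ω | Y0 ω = y ∧ A ω = a ∧ D ω = d} ∩ {ω | X ω = x} := by
        intro d; ext ω
        simp only [Set.mem_inter_iff, Set.mem_setOf_eq]; tauto
      have h3 : ∀ d : Bool,
          {ω | A ω = a ∧ D ω = d} ∩ {ω | X ω = x} =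
            ({ω | A ω = a} ∩ {ω | X ω = x}) ∩ {ω | D ω = d} := by
        intro d; ext ω
        simp only [Set.mem_inter_iff, Set.mem_setOf_eq]; tauto
      rw [h1]
      calc ∑' d : Bool, pr P ((({ω | A ω = a} ∩ {ω | Y0 ω = y}) ∩ {ω | X ω = x})
              ∩ {ω | D ω = d})
          = ∑' d : Bool, cpr P {ω | Y0 ω = y} {ω | X ω = x} *
              pr P (({ω | A ω = a} ∩ {ω | X ω = x}) ∩ {ω | D ω = d}) := by
            refine tsum_congr fun d => ?_
            rw [h2 d, hCI' d a, h3 d]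
        _ = cpr P {ω | Y0 ω = y} {ω | X ω = x} *
              ∑' d : Bool, pr P (({ω | A ω = a} ∩ {ω | X ω = x}) ∩ {ω | D ω = d}) :=
            tsum_mul_left
        _ = cpr P {ω | Y0 ω = y} {ω | X ω = x} *
              pr P ({ω | A ω = a} ∩ {ω | X ω = x}) := by
            rw [← pr_partition P D hD _ (msA.inter msX)]
    -- part 1: mu = nu
    have hE1 : pr P ({ω | Y0 ω = y} ∩ {ω | D ω = false ∧ X ω = x}) =
        cpr P {ω | Y0 ω = y} {ω | X ω = x} * pr P {ω | D ω = false ∧ X ω = x} := by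
      have h1 := pr_partition P A hA ({ω | Y0 ω = y} ∩ {ω | D ω = false ∧ X ω = x})
        (msY0.inter msE2)
      have h2 := pr_partition P A hA {ω | D ω = false ∧ X ω = x} msE2
      have h4 : ∀ a' : 𝒜,
          ({ω | Y0 ω = y} ∩ {ω | D ω = false ∧ X ω = x}) ∩ {ω | A ω = a'} =
            {ω | Y0 ω = y ∧ A ω = a' ∧ D ω = false} ∩ {ω | X ω = x} := by
        intro a'; ext ω
        simp only [Set.mem_inter_iff, Set.mem_setOf_eq]; tauto
      have h5 : ∀ a' : 𝒜,
          {ω | A ω = a' ∧ D ω = false} ∩ {ω | X ω = x} =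
            {ω | D ω = false ∧ X ω = x} ∩ {ω | A ω = a'} := by
        intro a'; ext ω
        simp only [Set.mem_inter_iff, Set.mem_setOf_eq]; tauto
      rw [h1]
      calc ∑' a' : 𝒜, pr P (({ω | Y0 ω = y} ∩ {ω | D ω = false ∧ X ω = x}) ∩ {ω | A ω = a'})
          = ∑' a' : 𝒜, cpr P {ω | Y0 ω = y} {ω | X ω = x} *
              pr P ({ω | D ω = false ∧ X ω = x} ∩ {ω | A ω = a'}) := by
            refine tsum_congr fun a' => ?_
            rw [h4 a', hCI' false a', h5 a']
        _ = cpr P {ω | Y0 ω = y} {ω | X ω = x} *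
              ∑' a' : 𝒜, pr P ({ω | D ω = false ∧ X ω = x} ∩ {ω | A ω = a'}) :=
            tsum_mul_left
        _ = cpr P {ω | Y0 ω = y} {ω | X ω = x} * pr P {ω | D ω = false ∧ X ω = x} := by
            rw [← h2]
    -- consistency
    have hYY0 : pr P ({ω | Y ω = y} ∩ {ω | D ω = false ∧ X ω = x}) =
        pr P ({ω | Y0 ω = y} ∩ {ω | D ω = false ∧ X ω = x}) := by
      have hae : ({ω | Y ω = y} ∩ {ω | D ω = false ∧ X ω = x} : Set Ω) =ᵐ[P]
          ({ω | Y0 ω = y} ∩ {ω | D ω = false ∧ X ω = x} : Set Ω) := by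
        rw [Filter.eventuallyEq_set]
        filter_upwards [hcons] with ω h
        simp only [Set.mem_inter_iff, Set.mem_setOf_eq]
        constructor
        · rintro ⟨h1, h2, h3⟩; exact ⟨(h h2).symm.trans h1, h2, h3⟩
        · rintro ⟨h1, h2, h3⟩; exact ⟨(h h2).trans h1, h2, h3⟩
      exact congrArg ENNReal.toReal (measure_congr hae)
    refine ⟨?_, hNa⟩
    rw [cpr, hYY0, hE1, mul_div_assoc, div_self hxDne, mul_one]
  -- termwise identities for all x
  have keyD : ∀ x : 𝒳,
      cpr P {ω | Y ω = y} {ω | D ω = false ∧ X ω = x} * pr P {ω | X ω = x} =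
        pr P ({ω | Y0 ω = y} ∩ {ω | X ω = x}) := by
    intro x
    rcases eq_or_lt_of_le (ENNReal.toReal_nonneg : (0:ℝ) ≤ pr P {ω | X ω = x}) with h0|hx
    · have hx0 : pr P {ω | X ω = x} = 0 := h0.symm
      rw [pr_mono_zero P Set.inter_subset_right hx0, hx0, mul_zero]
    · obtain ⟨hmu, -⟩ := key x hx
      rw [hmu, cpr_mul P (ne_of_gt hx)]
  have keyN : ∀ x : 𝒳,
      cpr P {ω | Y ω = y} {ω | D ω = false ∧ X ω = x} *
        cpr P {ω | A ω = a} {ω | X ω = x} * pr P {ω | X ω = x} =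
        pr P (({ω | A ω = a} ∩ {ω | Y0 ω = y}) ∩ {ω | X ω = x}) := by
    intro x
    rcases eq_or_lt_of_le (ENNReal.toReal_nonneg : (0:ℝ) ≤ pr P {ω | X ω = x}) with h0|hx
    · have hx0 : pr P {ω | X ω = x} = 0 := h0.symm
      rw [pr_mono_zero P Set.inter_subset_right hx0, hx0, mul_zero]
    · obtain ⟨hmu, hNa⟩ := key x hx
      rw [hmu, hNa, mul_assoc, cpr_mul P (ne_of_gt hx)]
  have hden : (∑' x : 𝒳,
      cpr P {ω | Y ω = y} {ω | D ω = false ∧ X ω = x} * pr P {ω | X ω = x}) =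
      pr P {ω | Y0 ω = y} := by
    rw [tsum_congr keyD, ← pr_partition P X hX {ω | Y0 ω = y} msY0]
  have hnum : (∑' x : 𝒳,
      cpr P {ω | Y ω = y} {ω | D ω = false ∧ X ω = x} *
        cpr P {ω | A ω = a} {ω | X ω = x} * pr P {ω | X ω = x}) =
      pr P ({ω | A ω = a} ∩ {ω | Y0 ω = y}) := by
    rw [tsum_congr keyN, ← pr_partition P X hX _ (msA.inter msY0)]
  exact ⟨hden ▸ hpos, hden, by rw [hnum, hden]; rfl⟩
end

section
/- Fix y, s ∈ {0,1} and a ∈ 𝒜, and assume: consistency (P-almost surely, if D = 0 then Y = Y⁰); ignorability, i.e. for all a' ∈ 𝒜, x ∈ 𝒳, and s', y', d ∈ {0,1} with P(A=a', X=x, S=s') > 0, P(Y⁰=y', D=d | A=a', X=x, S=s') = P(Y⁰=y' | A=a', X=x, S=s') · P(D=d | A=a', X=x, S=s'); and positivity, i.e. P(D=0, A=a', X=x, S=s') > 0 whenever P(A=a', X=x, S=s') > 0. Then the inverse-probability-weighted mean recovers the joint law of prediction, group label, and potential outcome: E[ 1{D=0} · 1{S=s} · 1{Y=y} · 1{A=a}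 / (1 − π(A, X, S)) ] = P(S=s, Y⁰=y, A=a). -/
/-!
Split the event by the value `x` of the covariate. Inside the stratum `B = {A = a, X = x, S = s}`,
the denominator `1 - π(a, x, s)` is `P(D = 0 | B)`, consistency turns `{D = 0, Y = y}` into
`{D = 0, Y⁰ = y}`, and ignorability factors `P(Y⁰ = y, D = 0 | B)`, so each summand equals
`P(Y⁰ = y, B)`; strata of probability zero contribute zero on both sides. Summing these over
`x` gives `P(S = s, Y⁰ = y, A = a)` by countable additivity.
-/

open MeasureTheory

theorem MeasureTheory.measure_eq_tsum_inter_preimage_singleton {Ω β : Type*}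
    [MeasurableSpace Ω] [MeasurableSpace β] [MeasurableSingletonClass β] [Countable β]
    (μ : Measure Ω) {f : Ω → β} (hf : Measurable f) (E : Set Ω) :
    μ E = ∑' b, μ (E ∩ f ⁻¹' {b}) := by
  have hfib : ∀ b, MeasurableSet (f ⁻¹' {b}) := fun b => hf (measurableSet_singleton b)
  have hdisj : Pairwise (Function.onFun Disjoint fun b => f ⁻¹' {b}) := fun b c hbc =>
    (Set.disjoint_singleton.mpr hbc).preimage f
  calc μ E = μ.restrict (⋃ b, f ⁻¹' {b}) E := by
        rw [← Set.preimage_iUnion, Set.iUnion_of_singleton, Set.preimage_univ,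
          Measure.restrict_univ]
    _ = ∑' b, μ (E ∩ f ⁻¹' {b}) := by
        rw [Measure.restrict_iUnion hdisj hfib, Measure.sum_apply_of_countable]
        simp only [Measure.restrict_apply' (hfib _)]

section

variable {Ω : Type*} [MeasurableSpace Ω] {P : Measure Ω} {E F G : Set Ω}

theorem pr_eq_tsum_pr_inter_preimage_singleton {β : Type*} [MeasurableSpace β]
    [MeasurableSingletonClass β] [Countable β] [IsFiniteMeasure P] {f : Ω → β}
    (hf : Measurable f) (E : Set Ω) :
    pr P E = ∑' b, pr P (E ∩ f ⁻¹' {b}) := by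
  unfold pr
  rw [measure_eq_tsum_inter_preimage_singleton P hf E,
    ENNReal.tsum_toReal_eq fun b => measure_ne_top P _]

theorem pr_congr (h : E =ᵐ[P] F) : pr P E = pr P F :=
  congrArg ENNReal.toReal (measure_congr h)

theorem pr_eq_zero_of_subset [IsFiniteMeasure P] (hEF : E ⊆ F) (hF : pr P F = 0) :
    pr P E = 0 :=
  le_antisymm (hF ▸ ENNReal.toReal_mono (measure_ne_top P F) (measure_mono hEF))
    ENNReal.toReal_nonneg

theorem cpr_compl [IsFiniteMeasure P] (hE : MeasurableSet E) (hF : pr P F ≠ 0) :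
    cpr P Eᶜ F = 1 - cpr P E F := by
  have hsplit : pr P (E ∩ F) + pr P (Eᶜ ∩ F) = pr P F := by
    unfold pr
    rw [← ENNReal.toReal_add (measure_ne_top P _) (measure_ne_top P _), Set.inter_comm,
      ← Set.sdiff_eq_compl_inter, measure_inter_add_sdiff F hE]
  unfold cpr
  field_simp
  linarith

theorem pr_inter_inter_div_cpr_of_cpr_inter_eq_mul
    (hind : cpr P (E ∩ F) G = cpr P E G * cpr P F G) (hF : cpr P F G ≠ 0) :
    pr P (E ∩ F ∩ G) / cpr P F G = pr P (E ∩ G) := by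
  obtain ⟨hFG, hG⟩ := div_ne_zero_iff.mp hF
  unfold cpr at hind ⊢
  field_simp at hind ⊢
  linear_combination hind

theorem pr_div_one_sub_cpr_compl_eq_of_cpr_inter_eq_mul [IsFiniteMeasure P] {N : Set Ω}
    (hF : MeasurableSet F) (hN : N =ᵐ[P] (E ∩ F ∩ G : Set Ω))
    (hind : 0 < pr P G → cpr P (E ∩ F) G = cpr P E G * cpr P F G)
    (hpos : 0 < pr P G → 0 < pr P (F ∩ G)) :
    pr P N / (1 - cpr P Fᶜ G) = pr P (E ∩ G) := by
  rw [pr_congr hN]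
  rcases (show 0 ≤ pr P G from ENNReal.toReal_nonneg).eq_or_lt with hG | hG
  · rw [pr_eq_zero_of_subset Set.inter_subset_right hG.symm,
      pr_eq_zero_of_subset Set.inter_subset_right hG.symm, zero_div]
  · rw [← cpr_compl hF.compl hG.ne', compl_compl]
    exact pr_inter_inter_div_cpr_of_cpr_inter_eq_mul (hind hG) (div_pos (hpos hG) hG).ne'

end

theorem stmt_11_general
    {Ω 𝒜 𝒳 : Type*} [MeasurableSpace Ω]
    [MeasurableSpace 𝒳] [MeasurableSingletonClass 𝒳] [Countable 𝒳]
    (P : Measure Ω) [IsProbabilityMeasure P]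
    (Y0 Y D S : Ω → Bool) (A : Ω → 𝒜) (X : Ω → 𝒳)
    (hD : Measurable D) (hX : Measurable X)
    (y s : Bool) (a : 𝒜)
    (hcons : ∀ᵐ ω ∂P, D ω = false → Y ω = Y0 ω)
    (hig : ∀ (a' : 𝒜) (x : 𝒳) (s' y' d : Bool),
      0 < pr P {ω | A ω = a' ∧ X ω = x ∧ S ω = s'} →
      cpr P {ω | Y0 ω = y' ∧ D ω = d} {ω | A ω = a' ∧ X ω = x ∧ S ω = s'} =
        cpr P {ω | Y0 ω = y'} {ω | A ω = a' ∧ X ω = x ∧ S ω = s'} *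
          cpr P {ω | D ω = d} {ω | A ω = a' ∧ X ω = x ∧ S ω = s'})
    (hposD : ∀ (a' : 𝒜) (x : 𝒳) (s' : Bool),
      0 < pr P {ω | A ω = a' ∧ X ω = x ∧ S ω = s'} →
      0 < pr P {ω | D ω = false ∧ A ω = a' ∧ X ω = x ∧ S ω = s'}) :
    (∑' x : 𝒳,
        pr P {ω | D ω = false ∧ S ω = s ∧ Y ω = y ∧ A ω = a ∧ X ω = x} /
          (1 - cpr P {ω | D ω = true} {ω | A ω = a ∧ X ω = x ∧ S ω = s})) =
      pr P {ω | S ω = s ∧ Y0 ω = y ∧ A ω = a} := by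
  set B : 𝒳 → Set Ω := fun x => {ω | A ω = a ∧ X ω = x ∧ S ω = s}
  have htrue : {ω | D ω = true} = {ω | D ω = false}ᶜ := by
    ext ω
    simp
  have hstratum : ∀ x,
      pr P {ω | D ω = false ∧ S ω = s ∧ Y ω = y ∧ A ω = a ∧ X ω = x} /
        (1 - cpr P {ω | D ω = true} (B x)) = pr P ({ω | Y0 ω = y} ∩ B x) := fun x => by
    rw [htrue]
    refine pr_div_one_sub_cpr_compl_eq_of_cpr_inter_eq_mul (hD (measurableSet_singleton false))
      ?_ (hig a x s y false) (hposD a x s)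
    refine Filter.eventuallyEq_set.mpr ?_
    filter_upwards [hcons] with ω hω
    constructor
    · rintro ⟨hd, hs, hy, ha, hx⟩
      exact ⟨⟨(hω hd).symm.trans hy, hd⟩, ha, hx, hs⟩
    · rintro ⟨⟨hy, hd⟩, ha, hx, hs⟩
      exact ⟨hd, hs, (hω hd).trans hy, ha, hx⟩
  calc _ = ∑' x, pr P ({ω | Y0 ω = y} ∩ B x) := tsum_congr hstratum
    _ = ∑' x, pr P ({ω | S ω = s ∧ Y0 ω = y ∧ A ω = a} ∩ X ⁻¹' {x}) := by
      refine tsum_congr fun x => congrArg (pr P) ?_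
      ext ω
      simp only [B, Set.mem_inter_iff, Set.mem_ofPred_eq, Set.mem_preimage,
        Set.mem_singleton_iff]
      tauto
    _ = _ := (pr_eq_tsum_pr_inter_preimage_singleton hX _).symm

/-- under consistency, ignorability, and positivity, the
inverse-probability-weighted mean recovers the joint law of prediction, group label, and
potential outcome: `E[1{D=0}·1{S=s}·1{Y=y}·1{A=a}/(1−π(A,X,S))] = P(S=s, Y⁰=y, A=a)`,
where `π(a,x,s) = P(D=1 | A=a, X=x, S=s)` and the expectation is the series
`Σ_x P(D=0, Y=y, A=a, X=x, S=s)/(1−π(a,x,s))`.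
Binary variables are modelled as `Bool`-valued, with `1 = true` and `0 = false`. -/
theorem stmt_11
    {Ω 𝒜 𝒳 : Type*} [MeasurableSpace Ω]
    [MeasurableSpace 𝒜] [MeasurableSingletonClass 𝒜] [Countable 𝒜] [Nonempty 𝒜]
    [MeasurableSpace 𝒳] [MeasurableSingletonClass 𝒳] [Countable 𝒳] [Nonempty 𝒳]
    (P : Measure Ω) [IsProbabilityMeasure P]
    (Y0 Y D S : Ω → Bool) (A : Ω → 𝒜) (X : Ω → 𝒳)
    (hY0 : Measurable Y0) (hY : Measurable Y) (hD : Measurable D) (hS : Measurable S)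
    (hA : Measurable A) (hX : Measurable X)
    (y s : Bool) (a : 𝒜)
    (hcons : ∀ᵐ ω ∂P, D ω = false → Y ω = Y0 ω)
    (hig : ∀ (a' : 𝒜) (x : 𝒳) (s' y' d : Bool),
      0 < pr P {ω | A ω = a' ∧ X ω = x ∧ S ω = s'} →
      cpr P {ω | Y0 ω = y' ∧ D ω = d} {ω | A ω = a' ∧ X ω = x ∧ S ω = s'} =
        cpr P {ω | Y0 ω = y'} {ω | A ω = a' ∧ X ω = x ∧ S ω = s'} *
          cpr P {ω | D ω = d} {ω | A ω = a' ∧ X ω = x ∧ S ω = s'})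
    (hposD : ∀ (a' : 𝒜) (x : 𝒳) (s' : Bool),
      0 < pr P {ω | A ω = a' ∧ X ω = x ∧ S ω = s'} →
      0 < pr P {ω | D ω = false ∧ A ω = a' ∧ X ω = x ∧ S ω = s'}) :
    (∑' x : 𝒳,
        pr P {ω | D ω = false ∧ S ω = s ∧ Y ω = y ∧ A ω = a ∧ X ω = x} /
          (1 - cpr P {ω | D ω = true} {ω | A ω = a ∧ X ω = x ∧ S ω = s})) =
      pr P {ω | S ω = s ∧ Y0 ω = y ∧ A ω = a} :=
  stmt_11_general P Y0 Y D S A X hD hX y s a hcons hig hposD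
end

section
/- Assume P(Y⁰=0) > 0, consistency (P-almost surely, if D = 0 then Y = Y⁰), ignorability (for all a ∈ 𝒜, x ∈ 𝒳, and s, y, d ∈ {0,1} with P(A=a, X=x, S=s) > 0, P(Y⁰=y, D=d | A=a, X=x, S=s) = P(Y⁰=y | A=a, X=x, S=s) · P(D=d | A=a, X=x, S=s)), and positivity (P(D=0, A=a, X=x, S=s) > 0 whenever P(A=a, X=x, S=s) > 0). Then the overall counterfactual false positive rate is identified by the inverse-probability-weighted ratio: P(S=1 | Y⁰=0) = E[ 1{D=0} · 1{S=1} · 1{Y=0} / (1 − π(A,X,S)) ] / E[ 1{D=0} · 1{Y=0} / (1 − π(A,X,S)) ], where the denominator is strictly positive since it equals P(Y⁰=0). -/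
open MeasureTheory

/-! On a cell `C = {A = a, X = x, S = s}` of positive probability, ignorability gives
`P(Y⁰ = y, D = 0 | C) = P(Y⁰ = y | C) · P(D = 0 | C)` and `1 - π = P(D = 0 | C) > 0` by positivity,
so dividing `P(D = 0, Y⁰ = y, C)` by `1 - π` recovers `P(Y⁰ = y, C)`; consistency lets `Y` replace
`Y⁰` on `{D = 0}`. Null cells contribute zero to both sides, and summing over the countably many
cells gives `P(Y⁰ = 0)` and `P(S = 1, Y⁰ = 0)`. -/

open Function

section Probability

variable {Ω : Type*} [MeasurableSpace Ω] (P : Measure Ω)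

lemma pr_eq_measureReal (E : Set Ω) : pr P E = P.real E := rfl

lemma pr_inter_inter_div_cpr {E N C : Set Ω} (hC : pr P C ≠ 0) (hN : cpr P N C ≠ 0)
    (hind : cpr P (E ∩ N) C = cpr P E C * cpr P N C) :
    pr P (E ∩ N ∩ C) / cpr P N C = pr P (E ∩ C) := by
  rw [div_eq_iff hN]
  unfold cpr at hind ⊢
  field_simp at hind ⊢
  linear_combination hind

variable [IsFiniteMeasure P]

lemma pr_eq_tsum_pr_inter_preimage {γ : Type*} [MeasurableSpace γ] [MeasurableSingletonClass γ]
    [Countable γ] {f : Ω → γ} (hf : Measurable f) {E : Set Ω} (hE : MeasurableSet E) :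
    pr P E = ∑' c, pr P (E ∩ f ⁻¹' {c}) := by
  have hdisj : Pairwise (Disjoint on fun c => E ∩ f ⁻¹' {c}) := fun c d hcd =>
    ((Set.disjoint_singleton.2 hcd).preimage f).mono Set.inter_subset_right Set.inter_subset_right
  have hE_eq : E = ⋃ c, E ∩ f ⁻¹' {c} := by
    rw [← Set.inter_iUnion, ← Set.preimage_iUnion, Set.iUnion_of_singleton, Set.preimage_univ,
      Set.inter_univ]
  unfold pr
  conv_lhs => rw [hE_eq, measure_iUnion hdisj fun c => hE.inter (hf (measurableSet_singleton c))]
  exact ENNReal.tsum_toReal_eq fun c => measure_ne_top P _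

lemma pr_eq_tsum_pr_inter_cell {α β γ : Type*}
    [MeasurableSpace α] [MeasurableSingletonClass α] [Countable α]
    [MeasurableSpace β] [MeasurableSingletonClass β] [Countable β]
    [MeasurableSpace γ] [MeasurableSingletonClass γ] [Countable γ]
    {f : Ω → α} {g : Ω → β} {h : Ω → γ} (hf : Measurable f) (hg : Measurable g)
    (hh : Measurable h) {E : Set Ω} (hE : MeasurableSet E) :
    pr P E = ∑' (a : α) (b : β) (c : γ), pr P (E ∩ {ω | f ω = a ∧ g ω = b ∧ h ω = c}) := by
  rw [pr_eq_tsum_pr_inter_preimage P hf hE]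
  refine tsum_congr fun a => ?_
  have hEa := hE.inter (hf (measurableSet_singleton a))
  rw [pr_eq_tsum_pr_inter_preimage P hg hEa]
  refine tsum_congr fun b => ?_
  rw [pr_eq_tsum_pr_inter_preimage P hh (hEa.inter (hg (measurableSet_singleton b)))]
  refine tsum_congr fun c => congrArg (pr P) ?_
  ext ω
  simp only [Set.mem_inter_iff, Set.mem_preimage, Set.mem_singleton_iff, Set.mem_ofPred_eq]
  tauto

lemma one_sub_cpr_eq_cpr_compl {T C : Set Ω} (hT : MeasurableSet T) (hC : pr P C ≠ 0) :
    1 - cpr P T C = cpr P Tᶜ C := by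
  have hsplit : pr P (T ∩ C) + pr P (Tᶜ ∩ C) = pr P C := by
    simp only [pr_eq_measureReal, Set.inter_comm _ C, ← Set.sdiff_eq]
    exact measureReal_inter_add_sdiff (s := C) hT
  unfold cpr
  field_simp
  linarith

lemma pr_compl_inter_div_one_sub_cpr {E T C : Set Ω} (hT : MeasurableSet T)
    (hind : 0 < pr P C → cpr P (E ∩ Tᶜ) C = cpr P E C * cpr P Tᶜ C)
    (hpos : 0 < pr P C → 0 < pr P (Tᶜ ∩ C)) :
    pr P (Tᶜ ∩ (E ∩ C)) / (1 - cpr P T C) = pr P (E ∩ C) := by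
  by_cases hC : pr P C = 0
  · have hEC : pr P (E ∩ C) = 0 := measureReal_mono_null Set.inter_subset_right hC
    have hTEC : pr P (Tᶜ ∩ (E ∩ C)) = 0 := measureReal_mono_null Set.inter_subset_right hEC
    rw [hTEC, hEC, zero_div]
  have hC_pos : 0 < pr P C := lt_of_le_of_ne measureReal_nonneg (Ne.symm hC)
  rw [one_sub_cpr_eq_cpr_compl P hT hC, Set.inter_left_comm, ← Set.inter_assoc]
  exact pr_inter_inter_div_cpr P hC (div_ne_zero (hpos hC_pos).ne' hC) (hind hC_pos)

end Probability

section Identification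

variable {Ω : Type*} [MeasurableSpace Ω] {P : Measure Ω} {Y0 Y D : Ω → Bool}

lemma pr_control_eq_of_consistency (hcons : ∀ᵐ ω ∂P, D ω = false → Y ω = Y0 ω) (y : Bool)
    (R : Ω → Prop) :
    pr P {ω | D ω = false ∧ Y ω = y ∧ R ω} = pr P {ω | D ω = false ∧ Y0 ω = y ∧ R ω} := by
  refine measureReal_congr (Filter.eventuallyEq_set.2 ?_)
  filter_upwards [hcons] with ω hω
  by_cases hd : D ω = false <;> simp [hd, hω]

lemma ipw_term_eq_pr_inter [IsFiniteMeasure P] (hD : Measurable D)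
    (hcons : ∀ᵐ ω ∂P, D ω = false → Y ω = Y0 ω) {C : Set Ω} (y : Bool)
    (hig : 0 < pr P C → cpr P {ω | Y0 ω = y ∧ D ω = false} C =
      cpr P {ω | Y0 ω = y} C * cpr P {ω | D ω = false} C)
    (hposD : 0 < pr P C → 0 < pr P ({ω | D ω = false} ∩ C)) :
    pr P {ω | D ω = false ∧ Y ω = y ∧ ω ∈ C} / (1 - cpr P {ω | D ω = true} C) =
      pr P ({ω | Y0 ω = y} ∩ C) := by
  have hcompl : {ω | D ω = true}ᶜ = {ω | D ω = false} := by ext; simp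
  rw [Set.ofPred_and] at hig
  rw [pr_control_eq_of_consistency hcons]
  change pr P ({ω | D ω = false} ∩ ({ω | Y0 ω = y} ∩ C)) / _ = _
  rw [← hcompl] at hig hposD ⊢
  exact pr_compl_inter_div_one_sub_cpr P (hD (measurableSet_singleton true)) hig hposD

lemma ipw_term_score_true_eq_pr_inter [IsFiniteMeasure P] {𝒜 𝒳 : Type*} {S : Ω → Bool}
    {A : Ω → 𝒜} {X : Ω → 𝒳} {a : 𝒜} {x : 𝒳} (hD : Measurable D)
    (hcons : ∀ᵐ ω ∂P, D ω = false → Y ω = Y0 ω) (s : Bool)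
    (hig : 0 < pr P {ω | A ω = a ∧ X ω = x ∧ S ω = true} →
      cpr P {ω | Y0 ω = false ∧ D ω = false} {ω | A ω = a ∧ X ω = x ∧ S ω = true} =
        cpr P {ω | Y0 ω = false} {ω | A ω = a ∧ X ω = x ∧ S ω = true} *
          cpr P {ω | D ω = false} {ω | A ω = a ∧ X ω = x ∧ S ω = true})
    (hposD : 0 < pr P {ω | A ω = a ∧ X ω = x ∧ S ω = true} →
      0 < pr P {ω | D ω = false ∧ A ω = a ∧ X ω = x ∧ S ω = true}) :
    pr P {ω | D ω = false ∧ S ω = true ∧ Y ω = false ∧ A ω = a ∧ X ω = x ∧ S ω = s} /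
        (1 - cpr P {ω | D ω = true} {ω | A ω = a ∧ X ω = x ∧ S ω = s}) =
      pr P ({ω | S ω = true} ∩ {ω | Y0 ω = false} ∩ {ω | A ω = a ∧ X ω = x ∧ S ω = s}) := by
  cases s
  · have hD_empty : {ω | D ω = false ∧ S ω = true ∧ Y ω = false ∧ A ω = a ∧ X ω = x ∧
        S ω = false} = ∅ := by ext ω; grind
    have hY0_empty : {ω | S ω = true} ∩ {ω | Y0 ω = false} ∩
        {ω | A ω = a ∧ X ω = x ∧ S ω = false} = ∅ := by ext ω; grind
    simp [hD_empty, hY0_empty, pr]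
  · convert ipw_term_eq_pr_inter hD hcons false hig hposD using 2
    · congr 1; ext ω; grind
    · ext ω; grind

end Identification

theorem stmt_12_general
    {Ω 𝒜 𝒳 : Type*} [MeasurableSpace Ω]
    [MeasurableSpace 𝒜] [MeasurableSingletonClass 𝒜] [Countable 𝒜]
    [MeasurableSpace 𝒳] [MeasurableSingletonClass 𝒳] [Countable 𝒳]
    (P : Measure Ω) [IsProbabilityMeasure P]
    (Y0 Y D S : Ω → Bool) (A : Ω → 𝒜) (X : Ω → 𝒳)
    (hY0 : Measurable Y0) (hD : Measurable D) (hS : Measurable S)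
    (hA : Measurable A) (hX : Measurable X)
    (hpos : 0 < pr P {ω | Y0 ω = false})
    (hcons : ∀ᵐ ω ∂P, D ω = false → Y ω = Y0 ω)
    (hig : ∀ (a : 𝒜) (x : 𝒳) (s y d : Bool),
      0 < pr P {ω | A ω = a ∧ X ω = x ∧ S ω = s} →
      cpr P {ω | Y0 ω = y ∧ D ω = d} {ω | A ω = a ∧ X ω = x ∧ S ω = s} =
        cpr P {ω | Y0 ω = y} {ω | A ω = a ∧ X ω = x ∧ S ω = s} *
          cpr P {ω | D ω = d} {ω | A ω = a ∧ X ω = x ∧ S ω = s})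
    (hposD : ∀ (a : 𝒜) (x : 𝒳) (s : Bool),
      0 < pr P {ω | A ω = a ∧ X ω = x ∧ S ω = s} →
      0 < pr P {ω | D ω = false ∧ A ω = a ∧ X ω = x ∧ S ω = s}) :
    0 < (∑' (a : 𝒜) (x : 𝒳) (s : Bool),
          pr P {ω | D ω = false ∧ Y ω = false ∧ A ω = a ∧ X ω = x ∧ S ω = s} /
            (1 - cpr P {ω | D ω = true} {ω | A ω = a ∧ X ω = x ∧ S ω = s})) ∧
    (∑' (a : 𝒜) (x : 𝒳) (s : Bool),
        pr P {ω | D ω = false ∧ Y ω = false ∧ A ω = a ∧ X ω = x ∧ S ω = s} /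
          (1 - cpr P {ω | D ω = true} {ω | A ω = a ∧ X ω = x ∧ S ω = s})) =
      pr P {ω | Y0 ω = false} ∧
    cpr P {ω | S ω = true} {ω | Y0 ω = false} =
      (∑' (a : 𝒜) (x : 𝒳) (s : Bool),
          pr P {ω | D ω = false ∧ S ω = true ∧ Y ω = false ∧ A ω = a ∧ X ω = x ∧ S ω = s} /
            (1 - cpr P {ω | D ω = true} {ω | A ω = a ∧ X ω = x ∧ S ω = s})) /
        (∑' (a : 𝒜) (x : 𝒳) (s : Bool),
            pr P {ω | D ω = false ∧ Y ω = false ∧ A ω = a ∧ X ω = x ∧ S ω = s} /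
              (1 - cpr P {ω | D ω = true} {ω | A ω = a ∧ X ω = x ∧ S ω = s})) := by
  have hY0_false : MeasurableSet {ω | Y0 ω = false} := hY0 (measurableSet_singleton false)
  have hS_true : MeasurableSet {ω | S ω = true} := hS (measurableSet_singleton true)
  have hden : (∑' (a : 𝒜) (x : 𝒳) (s : Bool),
      pr P {ω | D ω = false ∧ Y ω = false ∧ A ω = a ∧ X ω = x ∧ S ω = s} /
        (1 - cpr P {ω | D ω = true} {ω | A ω = a ∧ X ω = x ∧ S ω = s})) =
      pr P {ω | Y0 ω = false} := by
    rw [pr_eq_tsum_pr_inter_cell P hA hX hS hY0_false]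
    exact tsum_congr fun a => tsum_congr fun x => tsum_congr fun s =>
      ipw_term_eq_pr_inter hD hcons false (hig a x s false false) (hposD a x s)
  have hnum : (∑' (a : 𝒜) (x : 𝒳) (s : Bool),
      pr P {ω | D ω = false ∧ S ω = true ∧ Y ω = false ∧ A ω = a ∧ X ω = x ∧ S ω = s} /
        (1 - cpr P {ω | D ω = true} {ω | A ω = a ∧ X ω = x ∧ S ω = s})) =
      pr P ({ω | S ω = true} ∩ {ω | Y0 ω = false}) := by
    rw [pr_eq_tsum_pr_inter_cell P hA hX hS (hS_true.inter hY0_false)]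
    exact tsum_congr fun a => tsum_congr fun x => tsum_congr fun s =>
      ipw_term_score_true_eq_pr_inter hD hcons s (hig a x true false false) (hposD a x true)
  exact ⟨hden ▸ hpos, hden, by rw [hnum, hden]; rfl⟩

/-- under consistency, ignorability, and positivity, the overall counterfactual
false positive rate is identified by the inverse-probability-weighted ratio:
`P(S=1 | Y⁰=0) = E[1{D=0}·1{S=1}·1{Y=0}/(1−π(A,X,S))] / E[1{D=0}·1{Y=0}/(1−π(A,X,S))]`,
where `π(a,x,s) = P(D=1 | A=a, X=x, S=s)`, the expectations are series over the level sets of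
`(A, X, S)` (the indicator `1{S=1}` is encoded by also requiring `S ω = true` in the event), and
the denominator is strictly positive since it equals `P(Y⁰=0)`.
Binary variables are modelled as `Bool`-valued, with `1 = true` and `0 = false`. -/
theorem stmt_12
    {Ω 𝒜 𝒳 : Type*} [MeasurableSpace Ω]
    [MeasurableSpace 𝒜] [MeasurableSingletonClass 𝒜] [Countable 𝒜] [Nonempty 𝒜]
    [MeasurableSpace 𝒳] [MeasurableSingletonClass 𝒳] [Countable 𝒳] [Nonempty 𝒳]
    (P : Measure Ω) [IsProbabilityMeasure P]
    (Y0 Y D S : Ω → Bool) (A : Ω → 𝒜) (X : Ω → 𝒳)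
    (hY0 : Measurable Y0) (hY : Measurable Y) (hD : Measurable D) (hS : Measurable S)
    (hA : Measurable A) (hX : Measurable X)
    (hpos : 0 < pr P {ω | Y0 ω = false})
    (hcons : ∀ᵐ ω ∂P, D ω = false → Y ω = Y0 ω)
    (hig : ∀ (a : 𝒜) (x : 𝒳) (s y d : Bool),
      0 < pr P {ω | A ω = a ∧ X ω = x ∧ S ω = s} →
      cpr P {ω | Y0 ω = y ∧ D ω = d} {ω | A ω = a ∧ X ω = x ∧ S ω = s} =
        cpr P {ω | Y0 ω = y} {ω | A ω = a ∧ X ω = x ∧ S ω = s} *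
          cpr P {ω | D ω = d} {ω | A ω = a ∧ X ω = x ∧ S ω = s})
    (hposD : ∀ (a : 𝒜) (x : 𝒳) (s : Bool),
      0 < pr P {ω | A ω = a ∧ X ω = x ∧ S ω = s} →
      0 < pr P {ω | D ω = false ∧ A ω = a ∧ X ω = x ∧ S ω = s}) :
    0 < (∑' (a : 𝒜) (x : 𝒳) (s : Bool),
          pr P {ω | D ω = false ∧ Y ω = false ∧ A ω = a ∧ X ω = x ∧ S ω = s} /
            (1 - cpr P {ω | D ω = true} {ω | A ω = a ∧ X ω = x ∧ S ω = s})) ∧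
    (∑' (a : 𝒜) (x : 𝒳) (s : Bool),
        pr P {ω | D ω = false ∧ Y ω = false ∧ A ω = a ∧ X ω = x ∧ S ω = s} /
          (1 - cpr P {ω | D ω = true} {ω | A ω = a ∧ X ω = x ∧ S ω = s})) =
      pr P {ω | Y0 ω = false} ∧
    cpr P {ω | S ω = true} {ω | Y0 ω = false} =
      (∑' (a : 𝒜) (x : 𝒳) (s : Bool),
          pr P {ω | D ω = false ∧ S ω = true ∧ Y ω = false ∧ A ω = a ∧ X ω = x ∧ S ω = s} /
            (1 - cpr P {ω | D ω = true} {ω | A ω = a ∧ X ω = x ∧ S ω = s})) /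
        (∑' (a : 𝒜) (x : 𝒳) (s : Bool),
            pr P {ω | D ω = false ∧ Y ω = false ∧ A ω = a ∧ X ω = x ∧ S ω = s} /
              (1 - cpr P {ω | D ω = true} {ω | A ω = a ∧ X ω = x ∧ S ω = s})) :=
  stmt_12_general P Y0 Y D S A X hY0 hD hS hA hX hpos hcons hig hposD
end
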